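/- arXiv:1807.09655 — 2 statements merged into one kernel-verified Lean document; each statement's English description precedes it below -/
import Mathlib

section
/- Let Z be a real-valued random variable following the centered Gaussian distribution N(0, σ²) with σ > 0, and for a real number k let p_k = P(⌊2^k·|Z|⌋ is even). Then (p_k − 1/2) / (2^{−k}/(2σ√(2π))) tends to 1 as k tends to +∞; that is, p_k − 1/2 is asymptotically equivalent to 2^{−k}/(2σ√(2π)). -/
/-!
Write `g u = (-1) ^ ⌊u⌋` and `c = 2 ^ k`, so that `p_k - 1/2 = E[g (c|Z|)] / 2`.
The primitive of `g` is the triangle wave `G`, whose mean is `1/2` because `G (u + 1) = 1 - G u`;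
hence the primitive `H` of `G - 1/2` is periodic and bounded. Integrating by parts twice against
a function `f` on `(0, ∞)` gives `c ∫ g (c x) f x = f 0 / 2 + c⁻¹ ∫ H (c x) f'' x`, so
`c ∫ g (c x) f x → f 0 / 2`. For the Gaussian density, `f 0 = 1 / (σ √(2π))`.
-/

open MeasureTheory ProbabilityTheory Real Filter Set Topology
open scoped NNReal

noncomputable def squareWave (u : ℝ) : ℝ := (-1) ^ ⌊u⌋

/-- The distance from `u` to the nearest even integer, written via `arccos ∘ cos` so that
continuity is immediate. -/
noncomputable def triangleWave (u : ℝ) : ℝ := arccos (cos (π * u)) / π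

noncomputable def triangleWavePrimitive (u : ℝ) : ℝ := ∫ t in 0..u, (triangleWave t - 1 / 2)

lemma measurable_squareWave : Measurable squareWave :=
  measurable_from_top.comp Int.measurable_floor

lemma abs_squareWave (u : ℝ) : |squareWave u| = 1 := by
  simp [squareWave, abs_zpow]

lemma squareWave_add_one (u : ℝ) : squareWave (u + 1) = -squareWave u := by
  simp [squareWave, Int.floor_add_one, zpow_add_one₀]

@[fun_prop]
lemma continuous_triangleWave : Continuous triangleWave := by
  unfold triangleWave; fun_prop

lemma abs_triangleWave_le_one (u : ℝ) : |triangleWave u| ≤ 1 := by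
  rw [abs_le, triangleWave, le_div_iff₀ pi_pos, div_le_one pi_pos]
  exact ⟨by linarith [arccos_nonneg (cos (π * u)), pi_pos], arccos_le_pi _⟩

lemma triangleWave_add_one (u : ℝ) : triangleWave (u + 1) = 1 - triangleWave u := by
  rw [triangleWave, triangleWave, mul_add, mul_one, cos_add_pi, arccos_neg]
  field_simp

lemma triangleWave_periodic : Function.Periodic triangleWave 2 := fun u => by
  rw [← one_add_one_eq_two, ← add_assoc, triangleWave_add_one, triangleWave_add_one,
    sub_sub_cancel]

lemma triangleWave_of_mem_Icc {u : ℝ} (hu : u ∈ Icc (0 : ℝ) 1) : triangleWave u = u := by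
  rw [triangleWave, arccos_cos (by nlinarith [pi_pos, hu.1]) (by nlinarith [pi_pos, hu.2])]
  field_simp

lemma triangleWave_zero : triangleWave 0 = 0 := triangleWave_of_mem_Icc ⟨le_rfl, zero_le_one⟩

lemma triangleWave_eq_of_mem_Icc {n : ℤ} {u : ℝ} (hu : u ∈ Icc (n : ℝ) (n + 1)) :
    triangleWave u = triangleWave n + squareWave n * (u - n) := by
  induction n using Int.induction_on generalizing u with
  | zero =>
    simp only [Int.cast_zero, zero_add] at hu
    rw [Int.cast_zero, triangleWave_of_mem_Icc hu, triangleWave_zero]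
    simp [squareWave]
  | succ n ih =>
    push_cast at ih hu ⊢
    rw [← sub_add_cancel u 1, triangleWave_add_one, triangleWave_add_one, squareWave_add_one,
      ih ⟨by linarith [hu.1], by linarith [hu.2]⟩]
    ring
  | pred n ih =>
    push_cast at ih hu ⊢
    have h := ih (u := u + 1) ⟨by linarith [hu.1], by linarith [hu.2]⟩
    rw [← sub_add_cancel (-(n : ℝ)) 1, triangleWave_add_one, squareWave_add_one,
      triangleWave_add_one] at h
    linarith

lemma hasDerivWithinAt_triangleWave (u : ℝ) :
    HasDerivWithinAt triangleWave (squareWave u) (Ici u) u := by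
  have hu : u ∈ Icc (⌊u⌋ : ℝ) (⌊u⌋ + 1) :=
    ⟨Int.floor_le u, (Int.lt_floor_add_one u).le⟩
  have hsq : squareWave u = squareWave ⌊u⌋ := by simp [squareWave]
  have hlin : HasDerivWithinAt (fun t => triangleWave ⌊u⌋ + squareWave ⌊u⌋ * (t - ⌊u⌋))
      (squareWave ⌊u⌋) (Ici u) u := by
    simpa using ((((hasDerivAt_id u).sub_const (⌊u⌋ : ℝ)).const_mul
      (squareWave ⌊u⌋)).const_add (triangleWave ⌊u⌋)).hasDerivWithinAt
  rw [hsq]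
  refine hlin.congr_of_eventuallyEq ?_ (triangleWave_eq_of_mem_Icc hu)
  filter_upwards [Ico_mem_nhdsGE (Int.lt_floor_add_one u)] with t ht
  exact triangleWave_eq_of_mem_Icc ⟨hu.1.trans ht.1, ht.2.le⟩

lemma intervalIntegrable_triangleWave_sub_half (a b : ℝ) :
    IntervalIntegrable (fun t => triangleWave t - 1 / 2) volume a b :=
  (continuous_triangleWave.sub continuous_const).intervalIntegrable a b

lemma integral_triangleWave_sub_half_zero_two :
    ∫ t in (0 : ℝ)..2, (triangleWave t - 1 / 2) = 0 := by
  have hshift : ∫ t in (1 : ℝ)..2, (triangleWave t - 1 / 2)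
      = -∫ t in (0 : ℝ)..1, (triangleWave t - 1 / 2) := by
    rw [← intervalIntegral.integral_neg]
    have h := intervalIntegral.integral_comp_add_right (fun t => triangleWave t - 1 / 2) (1 : ℝ)
      (a := 0) (b := 1)
    norm_num only at h
    rw [← h]
    congr 1 with t
    rw [triangleWave_add_one]
    ring
  rw [← intervalIntegral.integral_add_adjacent_intervals
    (intervalIntegrable_triangleWave_sub_half 0 1) (intervalIntegrable_triangleWave_sub_half 1 2),
    hshift, add_neg_cancel]

lemma hasDerivAt_triangleWavePrimitive (u : ℝ) :
    HasDerivAt triangleWavePrimitive (triangleWave u - 1 / 2) u :=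
  ((continuous_triangleWave.sub continuous_const).integral_hasStrictDerivAt 0 u).hasDerivAt

lemma triangleWavePrimitive_zero : triangleWavePrimitive 0 = 0 :=
  intervalIntegral.integral_same

@[fun_prop]
lemma continuous_triangleWavePrimitive : Continuous triangleWavePrimitive :=
  continuous_iff_continuousAt.2 fun u => (hasDerivAt_triangleWavePrimitive u).continuousAt

lemma triangleWavePrimitive_periodic : Function.Periodic triangleWavePrimitive 2 := by
  intro u
  rw [triangleWavePrimitive, triangleWavePrimitive, ← sub_eq_zero,
    intervalIntegral.integral_interval_sub_left (intervalIntegrable_triangleWave_sub_half _ _)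
      (intervalIntegrable_triangleWave_sub_half _ _)]
  have hper : Function.Periodic (fun t => triangleWave t - 1 / 2) 2 := fun t => by
    simp only [triangleWave_periodic t]
  rw [hper.intervalIntegral_add_eq u 0, zero_add, integral_triangleWave_sub_half_zero_two]

lemma exists_abs_triangleWavePrimitive_le : ∃ C, ∀ u, |triangleWavePrimitive u| ≤ C := by
  obtain ⟨C, hC⟩ := isBounded_iff_forall_norm_le.1
    (triangleWavePrimitive_periodic.isBounded_of_continuous two_ne_zero
      continuous_triangleWavePrimitive)
  exact ⟨C, fun u => hC _ (mem_range_self u)⟩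

theorem integral_Ioi_of_hasDerivWithinAt_Ioi_of_tendsto {E : Type*} [NormedAddCommGroup E]
    [NormedSpace ℝ E] [CompleteSpace E] {f f' : ℝ → E} {a : ℝ} {m : E}
    (hcont : ContinuousOn f (Ici a)) (hderiv : ∀ x ∈ Ioi a, HasDerivWithinAt f (f' x) (Ioi x) x)
    (f'int : IntegrableOn f' (Ioi a)) (hf : Tendsto f atTop (𝓝 m)) :
    ∫ x in Ioi a, f' x = m - f a := by
  refine tendsto_nhds_unique (intervalIntegral_tendsto_integral_Ioi a f'int tendsto_id) ?_
  refine (hf.sub_const _).congr' ?_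
  filter_upwards [eventually_ge_atTop a] with x hx
  refine (intervalIntegral.integral_eq_sub_of_hasDeriv_right_of_le hx
    (hcont.mono Icc_subset_Ici_self) (fun y hy => hderiv y hy.1) ?_).symm
  exact (intervalIntegrable_iff_integrableOn_Ioc_of_le hx).2 (f'int.mono_set Ioc_subset_Ioi_self)

section SquareWaveIntegral

variable {f f' f'' : ℝ → ℝ} {c : ℝ}

lemma hasDerivWithinAt_triangleWave_mul_sub_triangleWavePrimitive_mul
    (hf : ∀ x, HasDerivAt f (f' x) x) (hf' : ∀ x, HasDerivAt f' (f'' x) x) (hc : 0 < c)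
    (x : ℝ) :
    HasDerivWithinAt
      (fun x => triangleWave (c * x) * f x / c - triangleWavePrimitive (c * x) * f' x / c ^ 2)
      (squareWave (c * x) * f x + f' x / (2 * c) - triangleWavePrimitive (c * x) * f'' x / c ^ 2)
      (Ici x) x := by
  have hcx : HasDerivAt (fun x => c * x) c x := by simpa using (hasDerivAt_id x).const_mul c
  have hG : HasDerivWithinAt (fun x => triangleWave (c * x)) (squareWave (c * x) * c) (Ici x) x :=
    (hasDerivWithinAt_triangleWave (c * x)).comp x hcx.hasDerivWithinAt
      fun t (ht : x ≤ t) => mul_le_mul_of_nonneg_left ht hc.le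
  have hH : HasDerivAt (fun x => triangleWavePrimitive (c * x))
      ((triangleWave (c * x) - 1 / 2) * c) x :=
    (hasDerivAt_triangleWavePrimitive (c * x)).comp x hcx
  refine (((hG.mul (hf x).hasDerivWithinAt).div_const c).sub
    (((hH.mul (hf' x)).div_const (c ^ 2)).hasDerivWithinAt)).congr_deriv ?_
  field_simp
  ring

lemma tendsto_triangleWave_mul_sub_triangleWavePrimitive_mul (hf : Tendsto f atTop (𝓝 0))
    (hf' : Tendsto f' atTop (𝓝 0)) (c : ℝ) :
    Tendsto
      (fun x => triangleWave (c * x) * f x / c - triangleWavePrimitive (c * x) * f' x / c ^ 2)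
      atTop (𝓝 0) := by
  obtain ⟨C, hC⟩ := exists_abs_triangleWavePrimitive_le
  have hG_bdd : IsBoundedUnder (· ≤ ·) atTop (norm ∘ fun x => triangleWave (c * x)) :=
    isBoundedUnder_of ⟨1, fun x => abs_triangleWave_le_one _⟩
  have hH_bdd :
      IsBoundedUnder (· ≤ ·) atTop (norm ∘ fun x => triangleWavePrimitive (c * x)) :=
    isBoundedUnder_of ⟨C, fun x => hC _⟩
  simpa using ((isBoundedUnder_le_mul_tendsto_zero hG_bdd hf).div_const c).sub
    ((isBoundedUnder_le_mul_tendsto_zero hH_bdd hf').div_const (c ^ 2))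

theorem mul_integral_squareWave_mul_eq (hf : ∀ x, HasDerivAt f (f' x) x)
    (hf' : ∀ x, HasDerivAt f' (f'' x) x) (hfi : IntegrableOn f (Ioi 0))
    (hf'i : IntegrableOn f' (Ioi 0)) (hf''i : IntegrableOn f'' (Ioi 0)) (hc : 0 < c) :
    c * ∫ x in Ioi 0, squareWave (c * x) * f x
      = f 0 / 2 + c⁻¹ * ∫ x in Ioi 0, triangleWavePrimitive (c * x) * f'' x := by
  obtain ⟨C, hC⟩ := exists_abs_triangleWavePrimitive_le
  have hf_lim : Tendsto f atTop (𝓝 0) :=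
    tendsto_zero_of_hasDerivAt_of_integrableOn_Ioi (fun x _ => hf x) hf'i hfi
  have hf'_lim : Tendsto f' atTop (𝓝 0) :=
    tendsto_zero_of_hasDerivAt_of_integrableOn_Ioi (fun x _ => hf' x) hf''i hf'i
  have hG_int : IntegrableOn (fun x => squareWave (c * x) * f x) (Ioi 0) :=
    hfi.bdd_mul (measurable_squareWave.comp (measurable_const_mul c)).aestronglyMeasurable
      (ae_of_all _ fun x => (abs_squareWave _).le)
  have hH_int : IntegrableOn (fun x => triangleWavePrimitive (c * x) * f'' x) (Ioi 0) :=
    hf''i.bdd_mul (continuous_triangleWavePrimitive.comp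
      (continuous_const_mul c)).aestronglyMeasurable (ae_of_all _ fun x => hC _)
  have hfc : Continuous f := continuous_iff_continuousAt.2 fun x => (hf x).continuousAt
  have hf'c : Continuous f' := continuous_iff_continuousAt.2 fun x => (hf' x).continuousAt
  have hF := integral_Ioi_of_hasDerivWithinAt_Ioi_of_tendsto (by fun_prop)
    (fun x _ => (hasDerivWithinAt_triangleWave_mul_sub_triangleWavePrimitive_mul hf hf' hc x).mono
      Ioi_subset_Ici_self)
    ((hG_int.add (hf'i.div_const _)).sub (hH_int.div_const _))
    (tendsto_triangleWave_mul_sub_triangleWavePrimitive_mul hf_lim hf'_lim c)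
  have hf'_integral : ∫ x in Ioi 0, f' x = -f 0 := by
    simpa using integral_Ioi_of_hasDerivAt_of_tendsto' (fun x _ => hf x) hf'i hf_lim
  rw [integral_sub ?left ?right, integral_add hG_int (hf'i.div_const _), integral_div,
    integral_div, hf'_integral] at hF
  case left => exact hG_int.add (hf'i.div_const _)
  case right => exact hH_int.div_const _
  simp only [mul_zero, triangleWave_zero, triangleWavePrimitive_zero, zero_mul, zero_div,
    sub_zero] at hF
  field_simp at hF ⊢
  linear_combination hF

theorem tendsto_mul_integral_squareWave_mul (hf : ∀ x, HasDerivAt f (f' x) x)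
    (hf' : ∀ x, HasDerivAt f' (f'' x) x) (hfi : IntegrableOn f (Ioi 0))
    (hf'i : IntegrableOn f' (Ioi 0)) (hf''i : IntegrableOn f'' (Ioi 0)) :
    Tendsto (fun c => c * ∫ x in Ioi 0, squareWave (c * x) * f x) atTop (𝓝 (f 0 / 2)) := by
  obtain ⟨C, hC⟩ := exists_abs_triangleWavePrimitive_le
  have hbound (c : ℝ) : ‖∫ x in Ioi 0, triangleWavePrimitive (c * x) * f'' x‖
      ≤ ∫ x in Ioi 0, C * |f'' x| := by
    refine norm_integral_le_of_norm_le (hf''i.norm.const_mul C) (ae_of_all _ fun x => ?_)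
    rw [norm_mul, Real.norm_eq_abs, Real.norm_eq_abs]
    exact mul_le_mul_of_nonneg_right (hC _) (abs_nonneg _)
  have herr : Tendsto (fun c : ℝ => c⁻¹ * ∫ x in Ioi 0, triangleWavePrimitive (c * x) * f'' x)
      atTop (𝓝 0) :=
    tendsto_inv_atTop_zero.zero_mul_isBoundedUnder_le (isBoundedUnder_of ⟨_, hbound⟩)
  simpa using (herr.const_add (f 0 / 2)).congr' <| (eventually_gt_atTop 0).mono fun c hc =>
    (mul_integral_squareWave_mul_eq hf hf' hfi hf'i hf''i hc).symm

end SquareWaveIntegral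

theorem tendsto_mul_integral_squareWave_mul_exp_neg_mul_sq {b : ℝ} (hb : 0 < b) :
    Tendsto (fun c => c * ∫ x in Ioi 0, squareWave (c * x) * exp (-b * x ^ 2)) atTop
      (𝓝 (1 / 2)) := by
  have hf (x : ℝ) : HasDerivAt (fun x => exp (-b * x ^ 2)) (-2 * b * x * exp (-b * x ^ 2)) x := by
    convert ((hasDerivAt_pow 2 x).const_mul (-b)).exp using 1
    ring
  have hf' (x : ℝ) : HasDerivAt (fun x => -2 * b * x * exp (-b * x ^ 2))
      ((4 * b ^ 2 * x ^ 2 - 2 * b) * exp (-b * x ^ 2)) x := by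
    have hlin : HasDerivAt (fun x => -2 * b * x) (-2 * b) x := by
      simpa using (hasDerivAt_id x).const_mul (-2 * b)
    exact (hlin.mul (hf x)).congr_deriv (by ring)
  have hf'i : Integrable fun x => -2 * b * x * exp (-b * x ^ 2) := by
    simpa only [mul_assoc] using (integrable_mul_exp_neg_mul_sq hb).const_mul (-2 * b)
  have hx2 : Integrable fun x : ℝ => x ^ 2 * exp (-b * x ^ 2) := by
    simpa using integrable_rpow_mul_exp_neg_mul_sq hb (s := 2) (by norm_num)
  have hf''i : Integrable fun x => (4 * b ^ 2 * x ^ 2 - 2 * b) * exp (-b * x ^ 2) := by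
    refine ((hx2.const_mul (4 * b ^ 2)).sub ((integrable_exp_neg_mul_sq hb).const_mul
      (2 * b))).congr (ae_of_all _ fun x => ?_)
    simp only [Pi.sub_apply]
    ring
  simpa using tendsto_mul_integral_squareWave_mul hf hf'
    (integrable_exp_neg_mul_sq hb).integrableOn hf'i.integrableOn hf''i.integrableOn

lemma measurableSet_even_floor {α : Type*} [MeasurableSpace α] {φ : α → ℝ}
    (hφ : Measurable φ) :
    MeasurableSet {x | Even ⌊φ x⌋} :=
  (Int.measurable_floor.comp hφ) (MeasurableSet.of_discrete : MeasurableSet {n : ℤ | Even n})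

lemma toReal_measure_even_floor {α : Type*} [MeasurableSpace α] (μ : Measure α)
    [IsProbabilityMeasure μ] {φ : α → ℝ} (hφ : Measurable φ) :
    (μ {x | Even ⌊φ x⌋}).toReal = 1 / 2 + (∫ x, squareWave (φ x) ∂μ) / 2 := by
  have hind (x : α) : {x | Even ⌊φ x⌋}.indicator 1 x = (1 + squareWave (φ x)) / 2 := by
    by_cases h : Even ⌊φ x⌋
    · simp [h, squareWave, h.neg_one_zpow]
    · simp [h, squareWave, (Int.not_even_iff_odd.1 h).neg_one_zpow]
  have hint : Integrable (fun x => squareWave (φ x)) μ :=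
    .of_bound (measurable_squareWave.comp hφ).aestronglyMeasurable 1
      (ae_of_all _ fun x => (abs_squareWave _).le)
  rw [← measureReal_def, ← integral_indicator_one (measurableSet_even_floor hφ)]
  simp_rw [hind]
  rw [integral_div, integral_add (integrable_const 1) hint]
  simp only [integral_const, probReal_univ, smul_eq_mul, mul_one]
  ring

lemma integral_squareWave_mul_abs_gaussianReal {v : ℝ≥0} (hv : v ≠ 0) (c : ℝ) :
    ∫ x, squareWave (c * |x|) ∂gaussianReal 0 v
      = 2 * (√(2 * π * v))⁻¹ *
        ∫ x in Ioi 0, squareWave (c * x) * exp (-(2 * (v : ℝ))⁻¹ * x ^ 2) := by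
  have hpdf (x : ℝ) : gaussianPDFReal 0 v x • squareWave (c * |x|)
      = (√(2 * π * v))⁻¹ *
        (squareWave (c * |x|) * exp (-(2 * (v : ℝ))⁻¹ * |x| ^ 2)) := by
    rw [gaussianPDFReal, smul_eq_mul, sq_abs, sub_zero, neg_div, div_eq_inv_mul, ← neg_mul]
    ring
  simp_rw [integral_gaussianReal_eq_integral_smul hv, hpdf]
  rw [integral_const_mul,
    integral_comp_abs (f := fun y => squareWave (c * y) * exp (-(2 * (v : ℝ))⁻¹ * y ^ 2))]
  ring

lemma toReal_measure_even_floor_mul_abs_of_map_eq_gaussianReal {Ω : Type*}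
    [MeasurableSpace Ω] {P : Measure Ω} [IsProbabilityMeasure P] {Z : Ω → ℝ} {v : ℝ≥0}
    (hv : v ≠ 0) (hZ : P.map Z = gaussianReal 0 v) (c : ℝ) :
    (P {ω | Even ⌊c * |Z ω|⌋}).toReal = 1 / 2 + (√(2 * π * v))⁻¹ *
      ∫ x in Ioi 0, squareWave (c * x) * exp (-(2 * (v : ℝ))⁻¹ * x ^ 2) := by
  have hZm : AEMeasurable Z P := .of_map_ne_zero (by rw [hZ]; exact IsProbabilityMeasure.ne_zero _)
  have hφ : Measurable fun x : ℝ => c * |x| := measurable_const.mul measurable_abs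
  have hlaw : P {ω | Even ⌊c * |Z ω|⌋} = gaussianReal 0 v {x | Even ⌊c * |x|⌋} := by
    rw [← hZ, Measure.map_apply_of_aemeasurable hZm (measurableSet_even_floor hφ)]
    rfl
  rw [hlaw, toReal_measure_even_floor _ hφ, integral_squareWave_mul_abs_gaussianReal hv]
  ring

/-- For `Z ~ N(0, σ²)` and `p_k = P(⌊2^k·|Z|⌋ is even)`, the quantity
`(p_k − 1/2) / (2^{−k}/(2σ√(2π)))` tends to `1` as `k → +∞`:
`p_k − 1/2` is asymptotically equivalent to `2^{−k}/(2σ√(2π))`. -/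
theorem contributing_bit_probability_asymptotic
    {Ω : Type*} [MeasurableSpace Ω] (P : Measure Ω) [IsProbabilityMeasure P]
    (Z : Ω → ℝ) (σ : ℝ) (hσ : 0 < σ)
    (hZ : Measure.map Z P = gaussianReal 0 ⟨σ ^ 2, sq_nonneg σ⟩)
    (pk : ℝ → ℝ)
    (hpk : ∀ k : ℝ, pk k = (P {ω | Even ⌊(2 : ℝ) ^ k * |Z ω|⌋}).toReal) :
    Tendsto (fun k : ℝ =>
        (pk k - 1 / 2) / ((2 : ℝ) ^ (-k) / (2 * σ * Real.sqrt (2 * π))))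
      atTop (nhds 1) := by
  set v : ℝ≥0 := ⟨σ ^ 2, sq_nonneg σ⟩
  have hv : (v : ℝ) = σ ^ 2 := rfl
  have hv0 : v ≠ 0 := fun h => (pow_pos hσ 2).ne' (congrArg NNReal.toReal h)
  have hsqrt : √(2 * π * σ ^ 2) = σ * √(2 * π) := by
    rw [mul_comm, sqrt_mul (sq_nonneg σ), sqrt_sq hσ.le]
  have hratio (k : ℝ) : (pk k - 1 / 2) / ((2 : ℝ) ^ (-k) / (2 * σ * √(2 * π)))
      = 2 * (2 ^ k *
        ∫ x in Ioi 0, squareWave (2 ^ k * x) * exp (-(2 * σ ^ 2)⁻¹ * x ^ 2)) := by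
    rw [hpk, toReal_measure_even_floor_mul_abs_of_map_eq_gaussianReal hv0 hZ, hv, hsqrt,
      rpow_neg zero_le_two]
    field_simp
    ring
  have h := ((tendsto_mul_integral_squareWave_mul_exp_neg_mul_sq (b := (2 * σ ^ 2)⁻¹)
    (by positivity)).comp (tendsto_rpow_atTop_of_base_gt_one 2 one_lt_two)).const_mul 2
  rw [mul_one_div_cancel two_ne_zero] at h
  exact h.congr fun k => (hratio k).symm
end

section
/- Let Z be a real-valued random variable following the centered Gaussian distribution N(0, σ²) with σ > 0, and for a real number k let p_k = P(⌊2^k·|Z|⌋ is even). Then p_k tends to 1/2 as k tends to +∞; that is, bits far beyond the precision of the computation contribute with probability tending to 1/2 and are indistinguishable from random noise. -/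
/-!
Let `h = t⁻¹` and `S = {y | ⌊t y⌋ even}`. Translation by `h` exchanges `S` and its complement,
so for an integrable `f` that is antitone on `[0, ∞)`
`2 ∫_{y ≥ 0} 1_S f - ∫_{y ≥ 0} f = ∫_{y ≥ 0} 1_S(y) (f y - f (y + h))`,
which lies between `0` and `∫_{y ≥ 0} (f y - f (y + h)) = ∫_0^h f ≤ f 0 · h`.
For the even Gaussian density this squeezes `P(⌊t |Z|⌋ even)` between `1/2` and `1/2 + f 0 / t`,
and `t = 2 ^ k → ∞`.
-/

open MeasureTheory ProbabilityTheory Filter Set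
open scoped NNReal

section Translation

variable {E : Type*} [NormedAddCommGroup E] [NormedSpace ℝ E]

lemma setIntegral_Ici_comp_add_right (F : ℝ → E) (a h : ℝ) :
    ∫ y in Ici a, F (y + h) = ∫ y in Ici (a + h), F y := by
  have := (measurePreserving_add_right volume h).setIntegral_preimage_emb
    (measurableEmbedding_addRight h) F (Ici (a + h))
  rwa [preimage_add_const_Ici, add_sub_cancel_right] at this

lemma setIntegral_Ici_eq_Ico_add_Ici {F : ℝ → E} {a b : ℝ} (hF : IntegrableOn F (Ici a))
    (hab : a ≤ b) : ∫ y in Ici a, F y = (∫ y in Ico a b, F y) + ∫ y in Ici b, F y := by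
  rw [← setIntegral_union ((Iio_disjoint_Ici le_rfl).mono_left Ico_subset_Iio_self)
    measurableSet_Ici (hF.mono_set Ico_subset_Ici_self) (hF.mono_set (Ici_subset_Ici.2 hab)),
    Ico_union_Ici_eq_Ici hab]

end Translation

section AntitoneOnIci

variable {f : ℝ → ℝ} {h : ℝ}

lemma integral_Ici_sub_comp_add_right (hf : Integrable f) (hh : 0 ≤ h) :
    ∫ y in Ici 0, (f y - f (y + h)) = ∫ y in Ico 0 h, f y := by
  rw [integral_sub hf.integrableOn (hf.comp_add_right h).integrableOn,
    setIntegral_Ici_comp_add_right, zero_add,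
    setIntegral_Ici_eq_Ico_add_Ici hf.integrableOn hh]
  abel

lemma AntitoneOn.setIntegral_Ico_le (hanti : AntitoneOn f (Ici 0))
    (hf : IntegrableOn f (Ico 0 h)) (hh : 0 ≤ h) : ∫ y in Ico 0 h, f y ≤ f 0 * h := by
  calc ∫ y in Ico 0 h, f y ≤ ∫ _ in Ico 0 h, f 0 :=
        setIntegral_mono_on hf (integrableOn_const measure_Ico_lt_top.ne) measurableSet_Ico
          fun y hy => hanti self_mem_Ici hy.1 hy.1
    _ = f 0 * h := by
        rw [setIntegral_const, Real.volume_real_Ico_of_le hh, smul_eq_mul, sub_zero, mul_comm]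

lemma AntitoneOn.setIntegral_Ici_indicator_sub_comp_add_mem_Icc
    (hanti : AntitoneOn f (Ici 0)) (hf : Integrable f) (hh : 0 ≤ h) {S : Set ℝ}
    (hS : MeasurableSet S) :
    ∫ y in Ici 0, S.indicator (fun y => f y - f (y + h)) y ∈ Icc 0 (∫ y in Ico 0 h, f y) := by
  have hdecr : ∀ y ∈ Ici (0 : ℝ), 0 ≤ f y - f (y + h) := fun y hy =>
    sub_nonneg.2 (hanti hy (mem_Ici.2 (add_nonneg hy hh)) (le_add_of_nonneg_right hh))
  have hint : Integrable fun y => f y - f (y + h) := hf.sub (hf.comp_add_right h)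
  refine ⟨setIntegral_nonneg measurableSet_Ici fun y hy =>
    indicator_nonneg (fun _ _ => hdecr y hy) y, ?_⟩
  rw [← integral_Ici_sub_comp_add_right hf hh]
  exact setIntegral_mono_on (hint.indicator hS).integrableOn hint.integrableOn
    measurableSet_Ici fun y hy => indicator_le_self' (fun _ _ => hdecr y hy) y

end AntitoneOnIci

lemma measurableSet_even_floor_mul (t : ℝ) : MeasurableSet {y : ℝ | Even ⌊t * y⌋} :=
  (measurable_const_mul t).floor (MeasurableSet.of_discrete : MeasurableSet {n : ℤ | Even n})

lemma measurableSet_even_floor_mul_abs (t : ℝ) : MeasurableSet {x : ℝ | Even ⌊t * |x|⌋} :=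
  measurable_abs (measurableSet_even_floor_mul t)

lemma two_mul_setIntegral_Ici_indicator_even_floor_sub {f : ℝ → ℝ} (hf : Integrable f) {t : ℝ}
    (ht : 0 < t) :
    2 * (∫ y in Ici 0, {y | Even ⌊t * y⌋}.indicator f y) - ∫ y in Ici 0, f y =
      ∫ y in Ici 0, {y | Even ⌊t * y⌋}.indicator (fun y => f y - f (y + t⁻¹)) y := by
  set S := {y : ℝ | Even ⌊t * y⌋}
  have hS : MeasurableSet S := measurableSet_even_floor_mul t
  have hflip : ∀ y, y + t⁻¹ ∈ Sᶜ ↔ y ∈ S := fun y => by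
    simp [S, mul_add, mul_inv_cancel₀ ht.ne']
  have hfirst : ∀ y ∈ Ico 0 t⁻¹, y ∈ S := fun y hy => by
    have : ⌊t * y⌋ = 0 := Int.floor_eq_zero_iff.2
      ⟨mul_nonneg ht.le hy.1, by simpa [ht.ne'] using mul_lt_mul_of_pos_left hy.2 ht⟩
    simp [S, this]
  have hsplit : ∀ y, S.indicator (fun y => f y - f (y + t⁻¹)) y =
      S.indicator f y - Sᶜ.indicator f (y + t⁻¹) := fun y => by
    by_cases hy : y ∈ S <;> simp [hy, indicator_of_mem, indicator_of_notMem, hflip]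
  have hcompl : ∫ y in Ici 0, Sᶜ.indicator f (y + t⁻¹) =
      (∫ y in Ici 0, f y) - ∫ y in Ici 0, S.indicator f y := by
    have hIco : ∫ y in Ico 0 t⁻¹, Sᶜ.indicator f y = 0 :=
      setIntegral_eq_zero_of_forall_eq_zero fun y hy =>
        indicator_of_notMem (not_not.2 (hfirst y hy)) f
    have hsplit₀ := setIntegral_Ici_eq_Ico_add_Ici (hf.indicator hS.compl).integrableOn
      (inv_pos.2 ht).le
    rw [hIco, zero_add] at hsplit₀
    rw [setIntegral_Ici_comp_add_right, zero_add, ← hsplit₀, indicator_compl]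
    exact integral_sub hf.integrableOn (hf.indicator hS).integrableOn
  simp_rw [hsplit]
  rw [integral_sub (hf.indicator hS).integrableOn
    ((hf.indicator hS.compl).comp_add_right t⁻¹).integrableOn, hcompl]
  ring

lemma Function.Even.integral_indicator_even_floor_mul_abs_mem_Icc {f : ℝ → ℝ}
    (heven : Function.Even f) (hanti : AntitoneOn f (Ici 0)) (hf : Integrable f) {t : ℝ}
    (ht : 0 < t) :
    ∫ x, {x | Even ⌊t * |x|⌋}.indicator f x ∈ Icc ((∫ x, f x) / 2) ((∫ x, f x) / 2 + f 0 / t) := by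
  set S := {y : ℝ | Even ⌊t * y⌋}
  have habs : ∀ x, f |x| = f x := fun x => by
    rcases abs_choice x with h | h <;> simp [h, heven x]
  have hfold : ∫ x, f x = 2 * ∫ y in Ici 0, f y := by
    rw [integral_Ici_eq_integral_Ioi, ← integral_comp_abs]
    simp_rw [habs]
  have hfold_ind :
      ∫ x, {x | Even ⌊t * |x|⌋}.indicator f x = 2 * ∫ y in Ici 0, S.indicator f y := by
    rw [integral_Ici_eq_integral_Ioi, ← integral_comp_abs (f := S.indicator f)]
    congr 1 with x
    by_cases hx : Even ⌊t * |x|⌋ <;> simp [S, hx, habs]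
  have hD := hanti.setIntegral_Ici_indicator_sub_comp_add_mem_Icc hf (inv_pos.2 ht).le
    (measurableSet_even_floor_mul t)
  rw [← two_mul_setIntegral_Ici_indicator_even_floor_sub hf ht] at hD
  have hc := hanti.setIntegral_Ico_le hf.integrableOn (inv_pos.2 ht).le
  rw [hfold, hfold_ind, div_eq_mul_inv (f 0)]
  constructor <;> linarith [hD.1, hD.2]

lemma gaussianPDFReal_zero_even (v : ℝ≥0) : Function.Even (gaussianPDFReal 0 v) := fun x => by
  simp [gaussianPDFReal]

lemma antitoneOn_gaussianPDFReal_zero (v : ℝ≥0) : AntitoneOn (gaussianPDFReal 0 v) (Ici 0) := by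
  intro a ha b _ hab
  simp only [gaussianPDFReal, sub_zero, neg_div]
  gcongr

lemma gaussianReal_even_floor_mul_abs_mem_Icc {v : ℝ≥0} (hv : v ≠ 0) {t : ℝ} (ht : 0 < t) :
    (gaussianReal 0 v {x | Even ⌊t * |x|⌋}).toReal ∈
      Icc (1 / 2) (1 / 2 + gaussianPDFReal 0 v 0 / t) := by
  have hA := measurableSet_even_floor_mul_abs t
  rw [gaussianReal_apply_eq_integral 0 hv, ENNReal.toReal_ofReal
    (setIntegral_nonneg hA fun x _ => gaussianPDFReal_nonneg 0 v x), ← integral_indicator hA]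
  simpa [integral_gaussianPDFReal_eq_one 0 hv] using
    (gaussianPDFReal_zero_even v).integral_indicator_even_floor_mul_abs_mem_Icc
      (antitoneOn_gaussianPDFReal_zero v) (integrable_gaussianPDFReal 0 v) ht

/-- For `Z ~ N(0, σ²)` and `p_k = P(⌊2^k·|Z|⌋ is even)`, `p_k → 1/2` as
`k → +∞`: bits far beyond the precision of the computation contribute with
probability tending to `1/2` and are indistinguishable from random noise. -/
theorem contributing_bit_probability_limit
    {Ω : Type*} [MeasurableSpace Ω] (P : Measure Ω) [IsProbabilityMeasure P]
    (Z : Ω → ℝ) (σ : ℝ) (hσ : 0 < σ)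
    (hZ : Measure.map Z P = gaussianReal 0 ⟨σ ^ 2, sq_nonneg σ⟩)
    (pk : ℝ → ℝ)
    (hpk : ∀ k : ℝ, pk k = (P {ω | Even ⌊(2 : ℝ) ^ k * |Z ω|⌋}).toReal) :
    Tendsto pk atTop (nhds (1 / 2)) := by
  have hv : (⟨σ ^ 2, sq_nonneg σ⟩ : ℝ≥0) ≠ 0 := fun h =>
    pow_ne_zero 2 hσ.ne' (congrArg NNReal.toReal h)
  have hZm : AEMeasurable Z P :=
    .of_map_ne_zero (by rw [hZ]; exact (instIsProbabilityMeasureGaussianReal _ _).ne_zero)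
  set C := gaussianPDFReal 0 ⟨σ ^ 2, sq_nonneg σ⟩ 0
  have hbounds : ∀ k : ℝ, pk k ∈ Icc (1 / 2) (1 / 2 + C / 2 ^ k) := fun k => by
    have hmap := Measure.map_apply_of_aemeasurable hZm (measurableSet_even_floor_mul_abs (2 ^ k))
    rw [hZ, preimage_ofPred_eq] at hmap
    rw [hpk, ← hmap]
    exact gaussianReal_even_floor_mul_abs_mem_Icc hv (by positivity)
  have hlim : Tendsto (fun k : ℝ => 1 / 2 + C / 2 ^ k) atTop (nhds (1 / 2)) := by
    simpa using tendsto_const_nhds.add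
      (tendsto_const_nhds.div_atTop (tendsto_rpow_atTop_of_base_gt_one 2 one_lt_two))
  exact tendsto_of_tendsto_of_tendsto_of_le_of_le tendsto_const_nhds hlim
    (fun k => (hbounds k).1) (fun k => (hbounds k).2)
end
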